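/- For all GL_𝒱-formulas φ, ψ and every X ∈ 𝒱, the translation ♯ commutes with substitution of propositional variables: (φ[ψ/X])♯ is syntactically identical to φ♯[ψ♯/X], provided the fresh bound propositional variables introduced by ♯ are chosen distinct from X and from the propositional variables of ψ. -/

import Mathlib

open FirstOrder Set

namespace GLMu

/-! ## Barred propositional variables -/

/-- Barred propositional variables: `Sum.inl X` is `X`, `Sum.inr X` is `X̄`. -/
def bar {V : Type*} : V ⊕ V → V ⊕ V := Sum.elim Sum.inr Sum.inl

def unbar {V : Type*} : V ⊕ V → V := Sum.elim id id

/-! ## First-order literals -/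

/-- First-order literals with equality: atomic formulas and their negations. -/
inductive Lit (L : Language) (𝒳 : Type*) where
  | eq (t₁ t₂ : L.Term 𝒳)
  | ne (t₁ t₂ : L.Term 𝒳)
  | rel {n : ℕ} (R : L.Relations n) (ts : Fin n → L.Term 𝒳)
  | nrel {n : ℕ} (R : L.Relations n) (ts : Fin n → L.Term 𝒳)

namespace Lit

variable {L : Language} {𝒳 : Type*}

/-- Negation of a literal. -/
def neg : Lit L 𝒳 → Lit L 𝒳
  | .eq t₁ t₂ => .ne t₁ t₂
  | .ne t₁ t₂ => .eq t₁ t₂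
  | .rel R ts => .nrel R ts
  | .nrel R ts => .rel R ts

variable {M : Type*} [L.Structure M]

/-- Semantics of a literal: the set of states in which it is true. -/
def sem : Lit L 𝒳 → Set (𝒳 → M)
  | .eq t₁ t₂ => {ω | t₁.realize ω = t₂.realize ω}
  | .ne t₁ t₂ => {ω | t₁.realize ω ≠ t₂.realize ω}
  | .rel R ts => {ω | Language.Structure.RelMap R (fun i => (ts i).realize ω)}
  | .nrel R ts => {ω | ¬ Language.Structure.RelMap R (fun i => (ts i).realize ω)}

end Lit

/-- The set of object variables occurring in a term. -/
def tvars {L : Language} {𝒳 : Type*} : L.Term 𝒳 → Set 𝒳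
  | .var x => {x}
  | .func _ ts => ⋃ i, tvars (ts i)

/-- The set of object variables occurring in a literal. -/
def Lit.ovars {L : Language} {𝒳 : Type*} : Lit L 𝒳 → Set 𝒳
  | .eq t₁ t₂ => tvars t₁ ∪ tvars t₂
  | .ne t₁ t₂ => tvars t₁ ∪ tvars t₂
  | .rel _ ts => ⋃ i, tvars (ts i)
  | .nrel _ ts => ⋃ i, tvars (ts i)

/-! ## Syntax of the first-order modal μ-calculus -/

/-- Formulas of the first-order modal μ-calculus `Lμ_𝒱` (raw syntax). -/
inductive MuF (L : Language) (𝒳 Act V : Type*) where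
  | lit (p : Lit L 𝒳)
  | var (X : V ⊕ V)
  | or (φ₁ φ₂ : MuF L 𝒳 Act V)
  | and (φ₁ φ₂ : MuF L 𝒳 Act V)
  | dia (a : Act) (φ : MuF L 𝒳 Act V)
  | box (a : Act) (φ : MuF L 𝒳 Act V)
  | mu (X : V ⊕ V) (φ : MuF L 𝒳 Act V)
  | nu (X : V ⊕ V) (φ : MuF L 𝒳 Act V)

namespace MuF

variable {L : Language} {𝒳 Act V : Type*}

/-- The propositional variables (in `𝒱̄`) mentioned anywhere in a formula. -/
def mentions : MuF L 𝒳 Act V → Set (V ⊕ V)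
  | .lit _ => ∅
  | .var X => {X}
  | .or φ ψ => φ.mentions ∪ ψ.mentions
  | .and φ ψ => φ.mentions ∪ ψ.mentions
  | .dia _ φ => φ.mentions
  | .box _ φ => φ.mentions
  | .mu X φ => {X} ∪ φ.mentions
  | .nu X φ => {X} ∪ φ.mentions

/-- Well-formedness: in `μX.ψ` and `νX.ψ` the body `ψ` may not mention `X̄`.
This is the constraint built into the grammar of `Lμ_𝒱`. -/
def WF : MuF L 𝒳 Act V → Prop
  | .lit _ => True
  | .var _ => True
  | .or φ ψ => φ.WF ∧ ψ.WF
  | .and φ ψ => φ.WF ∧ ψ.WF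
  | .dia _ φ => φ.WF
  | .box _ φ => φ.WF
  | .mu X φ => bar X ∉ φ.mentions ∧ φ.WF
  | .nu X φ => bar X ∉ φ.mentions ∧ φ.WF

/-- The free propositional variables of a formula. -/
def freeVars : MuF L 𝒳 Act V → Set (V ⊕ V)
  | .lit _ => ∅
  | .var X => {X}
  | .or φ ψ => φ.freeVars ∪ ψ.freeVars
  | .and φ ψ => φ.freeVars ∪ ψ.freeVars
  | .dia _ φ => φ.freeVars
  | .box _ φ => φ.freeVars
  | .mu X φ => φ.freeVars \ {X, bar X}
  | .nu X φ => φ.freeVars \ {X, bar X}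

/-- The propositional variables bound by a fixpoint operator somewhere in a formula. -/
def boundVars : MuF L 𝒳 Act V → Set (V ⊕ V)
  | .lit _ => ∅
  | .var _ => ∅
  | .or φ ψ => φ.boundVars ∪ ψ.boundVars
  | .and φ ψ => φ.boundVars ∪ ψ.boundVars
  | .dia _ φ => φ.boundVars
  | .box _ φ => φ.boundVars
  | .mu X φ => {X} ∪ φ.boundVars
  | .nu X φ => {X} ∪ φ.boundVars

/-- The list of bound propositional variables, with multiplicity. -/
def boundList : MuF L 𝒳 Act V → List (V ⊕ V)
  | .lit _ => []
  | .var _ => []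
  | .or φ ψ => φ.boundList ++ ψ.boundList
  | .and φ ψ => φ.boundList ++ ψ.boundList
  | .dia _ φ => φ.boundList
  | .box _ φ => φ.boundList
  | .mu X φ => X :: φ.boundList
  | .nu X φ => X :: φ.boundList

/-- Every propositional variable is bound at most once. -/
def BoundOnce (φ : MuF L 𝒳 Act V) : Prop := (φ.boundList.map unbar).Nodup

/-- The transition symbols occurring in a formula. -/
def acts : MuF L 𝒳 Act V → Set Act
  | .lit _ => ∅
  | .var _ => ∅
  | .or φ ψ => φ.acts ∪ ψ.acts
  | .and φ ψ => φ.acts ∪ ψ.acts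
  | .dia a φ => {a} ∪ φ.acts
  | .box a φ => {a} ∪ φ.acts
  | .mu _ φ => φ.acts
  | .nu _ φ => φ.acts

/-- The complement `φ̄` of an `Lμ_𝒱`-formula. -/
def compl : MuF L 𝒳 Act V → MuF L 𝒳 Act V
  | .lit p => .lit p.neg
  | .var X => .var (bar X)
  | .or φ ψ => .and φ.compl ψ.compl
  | .and φ ψ => .or φ.compl ψ.compl
  | .dia a φ => .box a φ.compl
  | .box a φ => .dia a φ.compl
  | .mu X φ => .nu (bar X) φ.compl
  | .nu X φ => .mu (bar X) φ.compl

/-- Implication `φ → ψ`, an abbreviation for `φ̄ ∨ ψ`. -/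
def imp (φ ψ : MuF L 𝒳 Act V) : MuF L 𝒳 Act V := .or φ.compl ψ

/-- Bi-implication `φ ↔ ψ`. -/
def iff (φ ψ : MuF L 𝒳 Act V) : MuF L 𝒳 Act V := .and (imp φ ψ) (imp ψ φ)

variable [DecidableEq V]

/-- Substitution `φ[ψ/X]` of `ψ` for all free occurrences of the propositional
variable `X` (and of `ψ̄` for all free occurrences of its complement). -/
def subst (X : V ⊕ V) (ψ : MuF L 𝒳 Act V) : MuF L 𝒳 Act V → MuF L 𝒳 Act V
  | .lit p => .lit p
  | .var Y => if Y = X then ψ else if Y = bar X then ψ.compl else .var Y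
  | .or φ₁ φ₂ => .or (subst X ψ φ₁) (subst X ψ φ₂)
  | .and φ₁ φ₂ => .and (subst X ψ φ₁) (subst X ψ φ₂)
  | .dia a φ => .dia a (subst X ψ φ)
  | .box a φ => .box a (subst X ψ φ)
  | .mu Y φ => if X = Y ∨ X = bar Y then .mu Y φ else .mu Y (subst X ψ φ)
  | .nu Y φ => if X = Y ∨ X = bar Y then .nu Y φ else .nu Y (subst X ψ φ)

/-- `X` is free for `ψ` in `φ`: no free occurrence of `X` in `φ` is in the scope of a
fixpoint operator binding a free propositional variable of `ψ`. -/
def FreeFor (X : V ⊕ V) (ψ : MuF L 𝒳 Act V) : MuF L 𝒳 Act V → Prop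
  | .lit _ => True
  | .var _ => True
  | .or φ₁ φ₂ => FreeFor X ψ φ₁ ∧ FreeFor X ψ φ₂
  | .and φ₁ φ₂ => FreeFor X ψ φ₁ ∧ FreeFor X ψ φ₂
  | .dia _ φ => FreeFor X ψ φ
  | .box _ φ => FreeFor X ψ φ
  | .mu Y φ => X = Y ∨ X = bar Y ∨
      (((X ∈ φ.freeVars ∨ bar X ∈ φ.freeVars) → (Y ∉ ψ.freeVars ∧ bar Y ∉ ψ.freeVars)) ∧
        FreeFor X ψ φ)
  | .nu Y φ => X = Y ∨ X = bar Y ∨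
      (((X ∈ φ.freeVars ∨ bar X ∈ φ.freeVars) → (Y ∉ ψ.freeVars ∧ bar Y ∉ ψ.freeVars)) ∧
        FreeFor X ψ φ)

end MuF

/-! ## Semantics of the first-order modal μ-calculus -/

section MuSem

variable {L : Language} {𝒳 Act V : Type*} {M : Type*} [L.Structure M] [DecidableEq V]

/-- The extension of a valuation `Ω : 𝒱 → 𝒫(𝒮)` to barred propositional variables,
with `Ω(X̄) = 𝒮 ∖ Ω(X)`. -/
def barVal (Ω : V → Set (𝒳 → M)) : V ⊕ V → Set (𝒳 → M) :=
  Sum.elim Ω (fun x => (Ω x)ᶜ)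

/-- The modified valuation `Ω[E/X]` for `X ∈ 𝒱̄`. -/
def modif (Ω : V → Set (𝒳 → M)) : V ⊕ V → Set (𝒳 → M) → V → Set (𝒳 → M)
  | .inl x, E => Function.update Ω x E
  | .inr x, E => Function.update Ω x Eᶜ

variable (tr : Act → (𝒳 → M) → (𝒳 → M) → Prop)

/-- Denotational semantics of `Lμ_𝒱`-formulas. -/
def MuF.sem : MuF L 𝒳 Act V → (V → Set (𝒳 → M)) → Set (𝒳 → M)
  | .lit p, _ => p.sem
  | .var X, Ω => barVal Ω X
  | .or φ ψ, Ω => φ.sem Ω ∪ ψ.sem Ω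
  | .and φ ψ, Ω => φ.sem Ω ∩ ψ.sem Ω
  | .dia a φ, Ω => {ω | ∃ ν, tr a ω ν ∧ ν ∈ φ.sem Ω}
  | .box a φ, Ω => {ω | ∀ ν, tr a ω ν → ν ∈ φ.sem Ω}
  | .mu X φ, Ω => ⋂₀ {D | φ.sem (modif Ω X D) ⊆ D}
  | .nu X φ, Ω => ⋃₀ {D | D ⊆ φ.sem (modif Ω X D)}

end MuSem

/-! ## Syntax of first-order game logic -/

universe uL vL u𝒳 uA uV

mutual
/-- Formulas of first-order game logic `GL_𝒱`. -/
inductive GLF (L : Language) (𝒳 : Type u𝒳) (Act : Type uA) (V : Type uV) where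
  | lit (p : Lit L 𝒳)
  | var (X : V)
  | not (φ : GLF L 𝒳 Act V)
  | or (φ₁ φ₂ : GLF L 𝒳 Act V)
  | dia (γ : GLG L 𝒳 Act V) (φ : GLF L 𝒳 Act V)

/-- Games of first-order game logic `GL_𝒱`. -/
inductive GLG (L : Language) (𝒳 : Type u𝒳) (Act : Type uA) (V : Type uV) where
  | act (a : Act)
  | test (φ : GLF L 𝒳 Act V)
  | choice (γ₁ γ₂ : GLG L 𝒳 Act V)
  | seq (γ₁ γ₂ : GLG L 𝒳 Act V)
  | star (γ : GLG L 𝒳 Act V)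
  | dual (γ : GLG L 𝒳 Act V)
end

section GLDefs

variable {L : Language} {𝒳 Act V : Type*}

mutual
/-- Propositional variables occurring in a game-logic formula. -/
def GLF.pvars : GLF L 𝒳 Act V → Set V
  | .lit _ => ∅
  | .var X => {X}
  | .not φ => φ.pvars
  | .or φ ψ => φ.pvars ∪ ψ.pvars
  | .dia γ φ => γ.pvars ∪ φ.pvars

/-- Propositional variables occurring in a game. -/
def GLG.pvars : GLG L 𝒳 Act V → Set V
  | .act _ => ∅
  | .test φ => φ.pvars
  | .choice γ₁ γ₂ => γ₁.pvars ∪ γ₂.pvars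
  | .seq γ₁ γ₂ => γ₁.pvars ∪ γ₂.pvars
  | .star γ => γ.pvars
  | .dual γ => γ.pvars
end

mutual
/-- Transition symbols occurring in a game-logic formula. -/
def GLF.acts : GLF L 𝒳 Act V → Set Act
  | .lit _ => ∅
  | .var _ => ∅
  | .not φ => φ.acts
  | .or φ ψ => φ.acts ∪ ψ.acts
  | .dia γ φ => γ.acts ∪ φ.acts

/-- Transition symbols occurring in a game. -/
def GLG.acts : GLG L 𝒳 Act V → Set Act
  | .act a => {a}
  | .test φ => φ.acts
  | .choice γ₁ γ₂ => γ₁.acts ∪ γ₂.acts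
  | .seq γ₁ γ₂ => γ₁.acts ∪ γ₂.acts
  | .star γ => γ.acts
  | .dual γ => γ.acts
end

variable [DecidableEq V]

mutual
/-- Substitution of the game-logic formula `χ` for the propositional variable `X`
(everywhere, including inside tests of games). -/
def GLF.psub (X : V) (χ : GLF L 𝒳 Act V) : GLF L 𝒳 Act V → GLF L 𝒳 Act V
  | .lit p => .lit p
  | .var Y => if Y = X then χ else .var Y
  | .not φ => .not (GLF.psub X χ φ)
  | .or φ ψ => .or (GLF.psub X χ φ) (GLF.psub X χ ψ)
  | .dia γ φ => .dia (GLG.psub X χ γ) (GLF.psub X χ φ)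

def GLG.psub (X : V) (χ : GLF L 𝒳 Act V) : GLG L 𝒳 Act V → GLG L 𝒳 Act V
  | .act a => .act a
  | .test φ => .test (GLF.psub X χ φ)
  | .choice γ₁ γ₂ => .choice (GLG.psub X χ γ₁) (GLG.psub X χ γ₂)
  | .seq γ₁ γ₂ => .seq (GLG.psub X χ γ₁) (GLG.psub X χ γ₂)
  | .star γ => .star (GLG.psub X χ γ)
  | .dual γ => .dual (GLG.psub X χ γ)
end

/-- Implication in game logic. -/
def GLF.gimp (φ ψ : GLF L 𝒳 Act V) : GLF L 𝒳 Act V := .or (.not φ) ψ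

/-- Conjunction in game logic. -/
def GLF.gand (φ ψ : GLF L 𝒳 Act V) : GLF L 𝒳 Act V := .not (.or (.not φ) (.not ψ))

/-- Bi-implication in game logic. -/
def GLF.giff (φ ψ : GLF L 𝒳 Act V) : GLF L 𝒳 Act V := GLF.gand (GLF.gimp φ ψ) (GLF.gimp ψ φ)

end GLDefs

/-! ## Semantics of first-order game logic -/

section GLSem

variable {L : Language} {𝒳 Act V : Type*} {M : Type*} [L.Structure M]
variable (tr : Act → (𝒳 → M) → (𝒳 → M) → Prop)

mutual
/-- Denotational semantics of game-logic formulas. -/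
def GLF.sem : GLF L 𝒳 Act V → (V → Set (𝒳 → M)) → Set (𝒳 → M)
  | .lit p, _ => p.sem
  | .var X, Ω => Ω X
  | .not φ, Ω => (φ.sem Ω)ᶜ
  | .or φ ψ, Ω => φ.sem Ω ∪ ψ.sem Ω
  | .dia γ φ, Ω => γ.sem Ω (φ.sem Ω)

/-- Denotational semantics of games: `γ.sem tr Ω D` is the set of states from which
Angel has a winning strategy in `γ` to reach `D`. -/
def GLG.sem : GLG L 𝒳 Act V → (V → Set (𝒳 → M)) → Set (𝒳 → M) → Set (𝒳 → M)
  | .act a, _, D => {ω | ∃ ν, tr a ω ν ∧ ν ∈ D}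
  | .test φ, Ω, D => φ.sem Ω ∩ D
  | .choice γ₁ γ₂, Ω, D => γ₁.sem Ω D ∪ γ₂.sem Ω D
  | .seq γ₁ γ₂, Ω, D => γ₁.sem Ω (γ₂.sem Ω D)
  | .star γ, Ω, D => ⋂₀ {Z | D ∪ γ.sem Ω Z ⊆ Z}
  | .dual γ, Ω, D => (γ.sem Ω Dᶜ)ᶜ
end

end GLSem


/-! ## The translation ♯ from game logic into the μ-calculus -/

section Sharp

variable {L : Language} {𝒳 Act V : Type*}

/-- The translation `♯` of `GL_𝒱`-formulas into `Lμ_𝒱`-formulas, as a relation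
(the clause for `⟨γ*⟩φ` chooses a fresh propositional variable `X`). -/
inductive Sharp : GLF L 𝒳 Act V → MuF L 𝒳 Act V → Prop
  | lit (p) : Sharp (.lit p) (.lit p)
  | var (X) : Sharp (.var X) (.var (Sum.inl X))
  | not {φ m} : Sharp φ m → Sharp (.not φ) m.compl
  | or {φ₁ φ₂ m₁ m₂} : Sharp φ₁ m₁ → Sharp φ₂ m₂ → Sharp (.or φ₁ φ₂) (.or m₁ m₂)
  | act {a φ m} : Sharp φ m → Sharp (.dia (.act a) φ) (.dia a m)
  | test {φ₁ φ₂ m₁ m₂} : Sharp φ₁ m₁ → Sharp φ₂ m₂ → Sharp (.dia (.test φ₁) φ₂) (.and m₁ m₂)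
  | choice {γ₁ γ₂ φ m₁ m₂} : Sharp (.dia γ₁ φ) m₁ → Sharp (.dia γ₂ φ) m₂ →
      Sharp (.dia (.choice γ₁ γ₂) φ) (.or m₁ m₂)
  | seq {γ₁ γ₂ φ m} : Sharp (.dia γ₁ (.dia γ₂ φ)) m → Sharp (.dia (.seq γ₁ γ₂) φ) m
  | dual {γ φ m} : Sharp (.dia γ (.not φ)) m → Sharp (.dia (.dual γ) φ) m.compl
  | star {γ φ X m} : X ∉ φ.pvars → X ∉ γ.pvars →
      Sharp (.or φ (.dia γ (.var X))) m →
      Sharp (.dia (.star γ) φ) (.mu (Sum.inl X) m)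

end Sharp

/-! ## The translation of μ-calculus formulas into games (dictionaries) -/

section Flat

variable {L : Language} {𝒳 Act V : Type*} [DecidableEq V]

/-- A barred propositional variable as a game logic formula (`X̄` is `¬X`). -/
def gvar : V ⊕ V → GLF L 𝒳 Act V := Sum.elim .var (fun x => .not (.var x))

/-- A canonical true game-logic formula `⊤`. -/
def glTrue (ℓ : 𝒳) : GLF L 𝒳 Act V := .lit (.eq (.var ℓ) (.var ℓ))

/-- A canonical false game-logic formula `⊥`. -/
def glFalse (ℓ : 𝒳) : GLF L 𝒳 Act V := .lit (.ne (.var ℓ) (.var ℓ))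

/-- The dictionary `ϑ[X]`, treating `X` (and `X̄`) as bound. -/
def dictUp (ϑ : V → Bool) (X : V ⊕ V) : V → Bool := Function.update ϑ (unbar X) true

/-- A dictionary is compatible with a formula iff it takes value `0` on all
propositional variables bound in the formula. -/
def Compat (ϑ : V → Bool) (φ : MuF L 𝒳 Act V) : Prop :=
  ∀ X ∈ φ.boundVars, ϑ (unbar X) = false

/-- Demonic choice `γ₁ ∩ γ₂`. -/
def GLG.dchoice (γ₁ γ₂ : GLG L 𝒳 Act V) : GLG L 𝒳 Act V := .dual (.choice (.dual γ₁) (.dual γ₂))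

/-- Demonic repetition `γ^×`. -/
def GLG.cross (γ : GLG L 𝒳 Act V) : GLG L 𝒳 Act V := .dual (.star (.dual γ))

/-- The translation `φ^ϑ` of an `Lμ_𝒱`-formula into a `GL_𝒱`-game, relative to a
dictionary `ϑ`, a control variable `ℓ`, constant symbols `c_X`, and the deterministic
assignment transition symbols `asn`. -/
def trGame (ℓ : 𝒳) (c : V ⊕ V → L.Constants) (asn : 𝒳 → L.Term 𝒳 → Act) :
    MuF L 𝒳 Act V → (V → Bool) → GLG L 𝒳 Act V
  | .lit p, _ => .seq (.test (.lit p)) (.dual (.test (glFalse ℓ)))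
  | .var X, ϑ =>
      if ϑ (unbar X) then .act (asn ℓ (Language.Constants.term (c X)))
      else .seq (.test (gvar X)) (.dual (.test (glFalse ℓ)))
  | .or φ ψ, ϑ => .choice (trGame ℓ c asn φ ϑ) (trGame ℓ c asn ψ ϑ)
  | .and φ ψ, ϑ => GLG.dchoice (trGame ℓ c asn φ ϑ) (trGame ℓ c asn ψ ϑ)
  | .dia a φ, ϑ => .seq (.act a) (trGame ℓ c asn φ ϑ)
  | .box a φ, ϑ => .seq (.dual (.act a)) (trGame ℓ c asn φ ϑ)
  | .mu X φ, ϑ => .seq (.act (asn ℓ (Language.Constants.term (c X))))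
      (.seq (.star (.seq (.test (.lit (.eq (.var ℓ) (Language.Constants.term (c X)))))
                         (trGame ℓ c asn φ (dictUp ϑ X))))
            (.test (.lit (.ne (.var ℓ) (Language.Constants.term (c X))))))
  | .nu X φ, ϑ => .seq (.act (asn ℓ (Language.Constants.term (c X))))
      (.seq (GLG.cross (.seq (.dual (.test (.lit (.eq (.var ℓ) (Language.Constants.term (c X))))))
                             (trGame ℓ c asn φ (dictUp ϑ X))))
            (.dual (.test (.lit (.ne (.var ℓ) (Language.Constants.term (c X)))))))

/-- The translation `ψ♭ = ⟨ψ^η⟩⊤` of an `Lμ`-formula into a `GL`-formula,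
where `η` is the dictionary that is `0` everywhere. -/
def flatF (ℓ : 𝒳) (c : V ⊕ V → L.Constants) (asn : 𝒳 → L.Term 𝒳 → Act)
    (ψ : MuF L 𝒳 Act V) : GLF L 𝒳 Act V :=
  .dia (trGame ℓ c asn ψ (fun _ => false)) (glTrue ℓ)

/-- The object variables occurring (in literals) in a μ-calculus formula. -/
def MuF.ovars : MuF L 𝒳 Act V → Set 𝒳
  | .lit p => p.ovars
  | .var _ => ∅
  | .or φ ψ => φ.ovars ∪ ψ.ovars
  | .and φ ψ => φ.ovars ∪ ψ.ovars
  | .dia _ φ => φ.ovars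
  | .box _ φ => φ.ovars
  | .mu _ φ => φ.ovars
  | .nu _ φ => φ.ovars

variable {M : Type*} [DecidableEq 𝒳]

/-- Object variable `y` is independent of transition `a` under interpretation `tr`:
whenever `(ω,ν) ∈ ⟦a⟧` then also `(ω[b/y],ν[b/y]) ∈ ⟦a⟧`. -/
def IndepAct (tr : Act → (𝒳 → M) → (𝒳 → M) → Prop) (y : 𝒳) (a : Act) : Prop :=
  ∀ (b : M) ω ν, tr a ω ν → tr a (Function.update ω y b) (Function.update ν y b)

/-- A valuation is independent of the object variable `y`. -/
def IndepVal (y : 𝒳) (Ω : V → Set (𝒳 → M)) : Prop :=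
  ∀ (X : V) (b : M) (ω : 𝒳 → M), ω ∈ Ω X ↔ Function.update ω y b ∈ Ω X

end Flat

/-! ## Signatures with deterministic and nondeterministic assignments -/

/-- Transition symbols of a signature with deterministic and nondeterministic
assignments: base symbols from `A₀`, deterministic assignments `x := θ`, and
nondeterministic assignments `x := *`. -/
inductive CAct (L : Language) (𝒳 : Type u𝒳) (A₀ : Type uA) where
  | base (a : A₀)
  | asn (x : 𝒳) (θ : L.Term 𝒳)
  | rand (x : 𝒳)

section CActDefs

variable {L : Language} {𝒳 A₀ : Type*} [DecidableEq 𝒳]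

/-- Substitution of the term `θ` for the object variable `x` in a term. -/
def tsub (x : 𝒳) (θ : L.Term 𝒳) (t : L.Term 𝒳) : L.Term 𝒳 :=
  t.subst (fun y => if y = x then θ else .var y)

/-- Swapping the object variables `x` and `y` in a term. -/
def tswap (x y : 𝒳) (t : L.Term 𝒳) : L.Term 𝒳 := t.relabel (Equiv.swap x y)

/-- Substitution in literals. -/
def Lit.osub (x : 𝒳) (θ : L.Term 𝒳) : Lit L 𝒳 → Lit L 𝒳
  | .eq t₁ t₂ => .eq (tsub x θ t₁) (tsub x θ t₂)
  | .ne t₁ t₂ => .ne (tsub x θ t₁) (tsub x θ t₂)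
  | .rel R ts => .rel R (fun i => tsub x θ (ts i))
  | .nrel R ts => .nrel R (fun i => tsub x θ (ts i))

/-- Swapping object variables in literals. -/
def Lit.oswap (x y : 𝒳) : Lit L 𝒳 → Lit L 𝒳
  | .eq t₁ t₂ => .eq (tswap x y t₁) (tswap x y t₂)
  | .ne t₁ t₂ => .ne (tswap x y t₁) (tswap x y t₂)
  | .rel R ts => .rel R (fun i => tswap x y (ts i))
  | .nrel R ts => .nrel R (fun i => tswap x y (ts i))

namespace CAct

/-- Whether the transition binds (assigns) the object variable `x`. -/
def bindsB (x : 𝒳) : CAct L 𝒳 A₀ → Bool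
  | .base _ => false
  | .asn y _ => decide (y = x)
  | .rand y => decide (y = x)

/-- Substitution of `θ` for `x` in a transition symbol. -/
def osub (x : 𝒳) (θ : L.Term 𝒳) : CAct L 𝒳 A₀ → CAct L 𝒳 A₀
  | .base a => .base a
  | .asn y η => .asn y (tsub x θ η)
  | .rand y => .rand y

/-- Renaming `x ↔ y` in a transition symbol, using the signature's closure `sw`
of base transition symbols under renaming. -/
def oswap (sw : 𝒳 → 𝒳 → A₀ → A₀) (x y : 𝒳) : CAct L 𝒳 A₀ → CAct L 𝒳 A₀
  | .base a => .base (sw x y a)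
  | .asn z η => .asn (Equiv.swap x y z) (tswap x y η)
  | .rand z => .rand (Equiv.swap x y z)

/-- The object variables a transition symbol may depend on, given an interface
`fvB` for base transition symbols. -/
def ovarsF (fvB : A₀ → Set 𝒳) : CAct L 𝒳 A₀ → Set 𝒳
  | .base b => fvB b
  | .asn x θ => {x} ∪ tvars θ
  | .rand x => {x}

/-- The object variables bound (assigned) by a transition symbol. -/
def obinds : CAct L 𝒳 A₀ → Set 𝒳
  | .base _ => ∅
  | .asn x _ => {x}
  | .rand x => {x}

/-- The base transition symbols of a transition symbol. -/
def bases : CAct L 𝒳 A₀ → Set A₀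
  | .base a => {a}
  | .asn _ _ => ∅
  | .rand _ => ∅

end CAct

/-- Interpretation of transition symbols in an assignment and quantifier structure:
base symbols are interpreted by `trb`, deterministic assignments update the assigned
variable to the value of the term, nondeterministic assignments update it arbitrarily. -/
def ctrans {M : Type*} [L.Structure M] (trb : A₀ → (𝒳 → M) → (𝒳 → M) → Prop) :
    CAct L 𝒳 A₀ → (𝒳 → M) → (𝒳 → M) → Prop
  | .base b => trb b
  | .asn x θ => fun ω ν => ν = Function.update ω x (θ.realize ω)
  | .rand x => fun ω ν => ∃ e : M, ν = Function.update ω x e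

end CActDefs

/-! ## Syntactic operations on μ-calculus formulas over such signatures -/

section MuCalcOps

variable {L : Language} {𝒳 V A₀ : Type*} [DecidableEq 𝒳] [DecidableEq V]

namespace MuF

/-- Substitution `φ[θ/x]` of a term for an object variable. Base transition symbols
are unaffected; substitution stops under transitions binding `x`. -/
def osub (x : 𝒳) (θ : L.Term 𝒳) :
    MuF L 𝒳 (CAct L 𝒳 A₀) V → MuF L 𝒳 (CAct L 𝒳 A₀) V
  | .lit p => .lit (p.osub x θ)
  | .var X => .var X
  | .or φ ψ => .or (osub x θ φ) (osub x θ ψ)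
  | .and φ ψ => .and (osub x θ φ) (osub x θ ψ)
  | .dia a φ => .dia (a.osub x θ) (if a.bindsB x then φ else osub x θ φ)
  | .box a φ => .box (a.osub x θ) (if a.bindsB x then φ else osub x θ φ)
  | .mu X φ => .mu X (osub x θ φ)
  | .nu X φ => .nu X (osub x θ φ)

/-- Renaming `φₓʸ`, swapping the object variables `x` and `y` throughout. -/
def oswap (sw : 𝒳 → 𝒳 → A₀ → A₀) (x y : 𝒳) :
    MuF L 𝒳 (CAct L 𝒳 A₀) V → MuF L 𝒳 (CAct L 𝒳 A₀) V
  | .lit p => .lit (p.oswap x y)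
  | .var X => .var X
  | .or φ ψ => .or (oswap sw x y φ) (oswap sw x y ψ)
  | .and φ ψ => .and (oswap sw x y φ) (oswap sw x y ψ)
  | .dia a φ => .dia (a.oswap sw x y) (oswap sw x y φ)
  | .box a φ => .box (a.oswap sw x y) (oswap sw x y φ)
  | .mu X φ => .mu X (oswap sw x y φ)
  | .nu X φ => .nu X (oswap sw x y φ)

/-- The object variables a formula may depend on. -/
def ovarsF (fvB : A₀ → Set 𝒳) : MuF L 𝒳 (CAct L 𝒳 A₀) V → Set 𝒳
  | .lit p => p.ovars
  | .var _ => ∅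
  | .or φ ψ => ovarsF fvB φ ∪ ovarsF fvB ψ
  | .and φ ψ => ovarsF fvB φ ∪ ovarsF fvB ψ
  | .dia a φ => a.ovarsF fvB ∪ ovarsF fvB φ
  | .box a φ => a.ovarsF fvB ∪ ovarsF fvB φ
  | .mu _ φ => ovarsF fvB φ
  | .nu _ φ => ovarsF fvB φ

/-- The object variables bound by some transition occurring in the formula. -/
def obindsC : MuF L 𝒳 (CAct L 𝒳 A₀) V → Set 𝒳
  | .lit _ => ∅
  | .var _ => ∅
  | .or φ ψ => obindsC φ ∪ obindsC ψ
  | .and φ ψ => obindsC φ ∪ obindsC ψ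
  | .dia a φ => a.obinds ∪ obindsC φ
  | .box a φ => a.obinds ∪ obindsC φ
  | .mu _ φ => obindsC φ
  | .nu _ φ => obindsC φ

/-- The base transition symbols occurring in a formula. -/
def baseActs : MuF L 𝒳 (CAct L 𝒳 A₀) V → Set A₀
  | .lit _ => ∅
  | .var _ => ∅
  | .or φ ψ => baseActs φ ∪ baseActs ψ
  | .and φ ψ => baseActs φ ∪ baseActs ψ
  | .dia a φ => a.bases ∪ baseActs φ
  | .box a φ => a.bases ∪ baseActs φ
  | .mu _ φ => baseActs φ
  | .nu _ φ => baseActs φ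

end MuF

/-- Admissibility of the substitution `φ[θ/x]` for the axiom `∃I`. -/
def OAdm (fvB : A₀ → Set 𝒳) (x : 𝒳) (θ : L.Term 𝒳)
    (φ : MuF L 𝒳 (CAct L 𝒳 A₀) V) : Prop :=
  x ∉ φ.ovarsF fvB ∨
    (φ.baseActs = ∅ ∧ (∀ y ∈ tvars θ, y ∉ φ.obindsC) ∧ φ.freeVars = ∅)

end MuCalcOps

/-! ## Propositional tautologies and equality axioms for the μ-calculus -/

section MuAx

variable {L : Language} {𝒳 Act V : Type*} [DecidableEq V]

namespace MuF

/-- Purely propositional formulas: built from propositional variables by `∨` and `∧`. -/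
def PureProp : MuF L 𝒳 Act V → Prop
  | .var _ => True
  | .or φ ψ => PureProp φ ∧ PureProp ψ
  | .and φ ψ => PureProp φ ∧ PureProp ψ
  | _ => False

/-- Evaluation of a purely propositional formula under a Boolean assignment,
interpreting bars as negation. -/
def propEval (v : V → Prop) : MuF L 𝒳 Act V → Prop
  | .var (.inl X) => v X
  | .var (.inr X) => ¬ v X
  | .or φ ψ => propEval v φ ∨ propEval v ψ
  | .and φ ψ => propEval v φ ∧ propEval v ψ
  | _ => False

end MuF

/-- Propositional tautologies: the smallest set of formulas closed under substitution
of propositional variables that contains all valid purely propositional formulas. -/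
inductive MuTaut : MuF L 𝒳 Act V → Prop
  | base {φ : MuF L 𝒳 Act V} : φ.PureProp → (∀ v : V → Prop, φ.propEval v) → MuTaut φ
  | subst {φ : MuF L 𝒳 Act V} (X : V ⊕ V) (ψ : MuF L 𝒳 Act V) :
      MuTaut φ → MuTaut (MuF.subst X ψ φ)

/-- Iterated implication `φ₁ → (φ₂ → ⋯ → χ)`. -/
def impChain : List (MuF L 𝒳 Act V) → MuF L 𝒳 Act V → MuF L 𝒳 Act V
  | [], χ => χ
  | φ :: t, χ => φ.imp (impChain t χ)

/-- The first-order equality axioms: equality is a congruence with respect to the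
function and predicate symbols of the first-order signature. -/
inductive MuEqAx : MuF L 𝒳 Act V → Prop
  | refl (t : L.Term 𝒳) : MuEqAx (.lit (.eq t t))
  | symm (t₁ t₂ : L.Term 𝒳) : MuEqAx ((MuF.lit (.eq t₁ t₂)).imp (.lit (.eq t₂ t₁)))
  | trans (t₁ t₂ t₃ : L.Term 𝒳) :
      MuEqAx ((MuF.lit (.eq t₁ t₂)).imp ((MuF.lit (.eq t₂ t₃)).imp (.lit (.eq t₁ t₃))))
  | congFun {n : ℕ} (f : L.Functions n) (ts ts' : Fin n → L.Term 𝒳) :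
      MuEqAx (impChain ((List.finRange n).map fun i => MuF.lit (.eq (ts i) (ts' i)))
        (.lit (.eq (Language.Term.func f ts) (Language.Term.func f ts'))))
  | congRel {n : ℕ} (R : L.Relations n) (ts ts' : Fin n → L.Term 𝒳) :
      MuEqAx (impChain ((List.finRange n).map fun i => MuF.lit (.eq (ts i) (ts' i)))
        ((MuF.lit (.rel R ts)).imp (.lit (.rel R ts'))))

/-- Renaming of bound propositional variables (α-equivalence). -/
inductive AEq : MuF L 𝒳 Act V → MuF L 𝒳 Act V → Prop
  | refl (φ) : AEq φ φ
  | symm {φ ψ} : AEq φ ψ → AEq ψ φ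
  | trans {φ ψ χ} : AEq φ ψ → AEq ψ χ → AEq φ χ
  | or {φ₁ φ₂ ψ₁ ψ₂} : AEq φ₁ ψ₁ → AEq φ₂ ψ₂ → AEq (.or φ₁ φ₂) (.or ψ₁ ψ₂)
  | and {φ₁ φ₂ ψ₁ ψ₂} : AEq φ₁ ψ₁ → AEq φ₂ ψ₂ → AEq (.and φ₁ φ₂) (.and ψ₁ ψ₂)
  | dia (a) {φ ψ} : AEq φ ψ → AEq (.dia a φ) (.dia a ψ)
  | box (a) {φ ψ} : AEq φ ψ → AEq (.box a φ) (.box a ψ)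
  | mu (X) {φ ψ} : AEq φ ψ → AEq (.mu X φ) (.mu X ψ)
  | nu (X) {φ ψ} : AEq φ ψ → AEq (.nu X φ) (.nu X ψ)
  | muRename {X Y : V ⊕ V} {φ : MuF L 𝒳 Act V} : Y ∉ φ.mentions → bar Y ∉ φ.mentions →
      AEq (.mu X φ) (.mu Y (MuF.subst X (.var Y) φ))
  | nuRename {X Y : V ⊕ V} {φ : MuF L 𝒳 Act V} : Y ∉ φ.mentions → bar Y ∉ φ.mentions →
      AEq (.nu X φ) (.nu Y (MuF.subst X (.var Y) φ))

end MuAx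

/-! ## The Hilbert-style proof calculus for the first-order modal μ-calculus -/

section MuCalc

variable {L : Language} {𝒳 V A₀ : Type*} [DecidableEq 𝒳] [DecidableEq V]

/-- Provability in the `Lμ`-calculus from the theory `T`, by a derivation all of whose
formulas belong to `S`. The calculus has rules `MP`, `Mₐ` and `FPμ`, the axioms
`μ` (unfolding), `∃I`, `V`, `⟨:=⟩`, all propositional tautologies and equality axioms,
and permits renaming of bound propositional variables. -/
inductive MuPrvIn (sw : 𝒳 → 𝒳 → A₀ → A₀) (fvB : A₀ → Set 𝒳)
    (S : Set (MuF L 𝒳 (CAct L 𝒳 A₀) V)) (T : Set (MuF L 𝒳 (CAct L 𝒳 A₀) V)) :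
    MuF L 𝒳 (CAct L 𝒳 A₀) V → Prop
  | hyp {φ} : φ ∈ T → φ ∈ S → MuPrvIn sw fvB S T φ
  | taut {φ} : MuTaut φ → φ.WF → φ ∈ S → MuPrvIn sw fvB S T φ
  | eqax {φ} : MuEqAx φ → φ ∈ S → MuPrvIn sw fvB S T φ
  | mufix {X φ} : (MuF.mu X φ).WF → MuF.FreeFor X (.mu X φ) φ →
      (MuF.subst X (.mu X φ) φ).iff (.mu X φ) ∈ S →
      MuPrvIn sw fvB S T ((MuF.subst X (.mu X φ) φ).iff (.mu X φ))
  | existsI {x θ φ} : φ.WF → OAdm fvB x θ φ →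
      (φ.osub x θ).imp (.dia (.rand x) φ) ∈ S →
      MuPrvIn sw fvB S T ((φ.osub x θ).imp (.dia (.rand x) φ))
  | vac {x ψ} : ψ.WF → x ∉ ψ.ovarsF fvB → ψ.freeVars = ∅ →
      (MuF.dia (.rand x) ψ).imp ψ ∈ S →
      MuPrvIn sw fvB S T ((MuF.dia (.rand x) ψ).imp ψ)
  | asgn {x y : 𝒳} {θ : L.Term 𝒳} {φ} : φ.WF → y ≠ x → y ∉ tvars θ →
      y ∉ φ.ovarsF fvB → φ.freeVars = ∅ →
      (MuF.dia (.asn x θ) φ).iff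
        (.dia (.rand y) (.and (.lit (.eq (.var y) θ)) (φ.oswap sw x y))) ∈ S →
      MuPrvIn sw fvB S T ((MuF.dia (.asn x θ) φ).iff
        (.dia (.rand y) (.and (.lit (.eq (.var y) θ)) (φ.oswap sw x y))))
  | mp {φ ψ} : MuPrvIn sw fvB S T (ψ.imp φ) → MuPrvIn sw fvB S T ψ → φ ∈ S →
      MuPrvIn sw fvB S T φ
  | mono (a : CAct L 𝒳 A₀) {ψ φ} : MuPrvIn sw fvB S T (ψ.imp φ) →
      (MuF.dia a ψ).imp (.dia a φ) ∈ S →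
      MuPrvIn sw fvB S T ((MuF.dia a ψ).imp (.dia a φ))
  | fpmu {X ψ φ} : MuF.FreeFor X φ ψ → (MuF.mu X ψ).WF →
      MuPrvIn sw fvB S T ((MuF.subst X φ ψ).imp φ) → (MuF.mu X ψ).imp φ ∈ S →
      MuPrvIn sw fvB S T ((MuF.mu X ψ).imp φ)
  | alpha {φ ψ} : AEq φ ψ → MuPrvIn sw fvB S T φ → ψ ∈ S → MuPrvIn sw fvB S T ψ

/-- Provability `T ⊢_Lμ φ` in the `Lμ`-calculus. -/
abbrev MuPrv (sw : 𝒳 → 𝒳 → A₀ → A₀) (fvB : A₀ → Set 𝒳)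
    (T : Set (MuF L 𝒳 (CAct L 𝒳 A₀) V)) : MuF L 𝒳 (CAct L 𝒳 A₀) V → Prop :=
  MuPrvIn sw fvB Set.univ T

end MuCalc

/-! ## Syntactic operations on game logic formulas over assignment signatures -/

section GLCalcOps

variable {L : Language} {𝒳 V A₀ : Type*} [DecidableEq 𝒳] [DecidableEq V]

mutual
/-- Substitution `φ[θ/x]` of a term for an object variable in game logic formulas. -/
def GLF.osub (x : 𝒳) (θ : L.Term 𝒳) :
    GLF L 𝒳 (CAct L 𝒳 A₀) V → GLF L 𝒳 (CAct L 𝒳 A₀) V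
  | .lit p => .lit (p.osub x θ)
  | .var X => .var X
  | .not φ => .not (GLF.osub x θ φ)
  | .or φ ψ => .or (GLF.osub x θ φ) (GLF.osub x θ ψ)
  | .dia γ φ => .dia (GLG.osub x θ γ) (GLF.osub x θ φ)

/-- Substitution of a term for an object variable in games. -/
def GLG.osub (x : 𝒳) (θ : L.Term 𝒳) :
    GLG L 𝒳 (CAct L 𝒳 A₀) V → GLG L 𝒳 (CAct L 𝒳 A₀) V
  | .act a => .act (a.osub x θ)
  | .test φ => .test (GLF.osub x θ φ)
  | .choice γ₁ γ₂ => .choice (GLG.osub x θ γ₁) (GLG.osub x θ γ₂)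
  | .seq γ₁ γ₂ => .seq (GLG.osub x θ γ₁) (GLG.osub x θ γ₂)
  | .star γ => .star (GLG.osub x θ γ)
  | .dual γ => .dual (GLG.osub x θ γ)
end

mutual
/-- Renaming `φₓʸ`, swapping the object variables `x` and `y` throughout. -/
def GLF.oswap (sw : 𝒳 → 𝒳 → A₀ → A₀) (x y : 𝒳) :
    GLF L 𝒳 (CAct L 𝒳 A₀) V → GLF L 𝒳 (CAct L 𝒳 A₀) V
  | .lit p => .lit (p.oswap x y)
  | .var X => .var X
  | .not φ => .not (GLF.oswap sw x y φ)
  | .or φ ψ => .or (GLF.oswap sw x y φ) (GLF.oswap sw x y ψ)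
  | .dia γ φ => .dia (GLG.oswap sw x y γ) (GLF.oswap sw x y φ)

def GLG.oswap (sw : 𝒳 → 𝒳 → A₀ → A₀) (x y : 𝒳) :
    GLG L 𝒳 (CAct L 𝒳 A₀) V → GLG L 𝒳 (CAct L 𝒳 A₀) V
  | .act a => .act (a.oswap sw x y)
  | .test φ => .test (GLF.oswap sw x y φ)
  | .choice γ₁ γ₂ => .choice (GLG.oswap sw x y γ₁) (GLG.oswap sw x y γ₂)
  | .seq γ₁ γ₂ => .seq (GLG.oswap sw x y γ₁) (GLG.oswap sw x y γ₂)
  | .star γ => .star (GLG.oswap sw x y γ)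
  | .dual γ => .dual (GLG.oswap sw x y γ)
end

mutual
/-- Object variables a game logic formula may depend on. -/
def GLF.ovarsF (fvB : A₀ → Set 𝒳) : GLF L 𝒳 (CAct L 𝒳 A₀) V → Set 𝒳
  | .lit p => p.ovars
  | .var _ => ∅
  | .not φ => GLF.ovarsF fvB φ
  | .or φ ψ => GLF.ovarsF fvB φ ∪ GLF.ovarsF fvB ψ
  | .dia γ φ => GLG.ovarsF fvB γ ∪ GLF.ovarsF fvB φ

def GLG.ovarsF (fvB : A₀ → Set 𝒳) : GLG L 𝒳 (CAct L 𝒳 A₀) V → Set 𝒳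
  | .act a => a.ovarsF fvB
  | .test φ => GLF.ovarsF fvB φ
  | .choice γ₁ γ₂ => GLG.ovarsF fvB γ₁ ∪ GLG.ovarsF fvB γ₂
  | .seq γ₁ γ₂ => GLG.ovarsF fvB γ₁ ∪ GLG.ovarsF fvB γ₂
  | .star γ => GLG.ovarsF fvB γ
  | .dual γ => GLG.ovarsF fvB γ
end

mutual
/-- Object variables bound by a transition occurring in a formula. -/
def GLF.obindsC : GLF L 𝒳 (CAct L 𝒳 A₀) V → Set 𝒳
  | .lit _ => ∅
  | .var _ => ∅
  | .not φ => GLF.obindsC φ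
  | .or φ ψ => GLF.obindsC φ ∪ GLF.obindsC ψ
  | .dia γ φ => GLG.obindsC γ ∪ GLF.obindsC φ

def GLG.obindsC : GLG L 𝒳 (CAct L 𝒳 A₀) V → Set 𝒳
  | .act a => a.obinds
  | .test φ => GLF.obindsC φ
  | .choice γ₁ γ₂ => GLG.obindsC γ₁ ∪ GLG.obindsC γ₂
  | .seq γ₁ γ₂ => GLG.obindsC γ₁ ∪ GLG.obindsC γ₂
  | .star γ => GLG.obindsC γ
  | .dual γ => GLG.obindsC γ
end

mutual
/-- The base transition symbols occurring in a formula. -/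
def GLF.baseActs : GLF L 𝒳 (CAct L 𝒳 A₀) V → Set A₀
  | .lit _ => ∅
  | .var _ => ∅
  | .not φ => GLF.baseActs φ
  | .or φ ψ => GLF.baseActs φ ∪ GLF.baseActs ψ
  | .dia γ φ => GLG.baseActs γ ∪ GLF.baseActs φ

def GLG.baseActs : GLG L 𝒳 (CAct L 𝒳 A₀) V → Set A₀
  | .act a => a.bases
  | .test φ => GLF.baseActs φ
  | .choice γ₁ γ₂ => GLG.baseActs γ₁ ∪ GLG.baseActs γ₂
  | .seq γ₁ γ₂ => GLG.baseActs γ₁ ∪ GLG.baseActs γ₂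
  | .star γ => GLG.baseActs γ
  | .dual γ => GLG.baseActs γ
end

/-- Admissibility of the substitution `φ[θ/x]` in game logic. -/
def GOAdm (fvB : A₀ → Set 𝒳) (x : 𝒳) (θ : L.Term 𝒳)
    (φ : GLF L 𝒳 (CAct L 𝒳 A₀) V) : Prop :=
  x ∉ φ.ovarsF fvB ∨ (φ.baseActs = ∅ ∧ ∀ y ∈ tvars θ, y ∉ φ.obindsC)

end GLCalcOps

/-! ## Propositional tautologies and equality axioms for game logic -/

section GLAx

variable {L : Language} {𝒳 Act V : Type*} [DecidableEq V]

/-- Purely propositional game logic formulas. -/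
def GLF.pPure : GLF L 𝒳 Act V → Prop
  | .var _ => True
  | .not φ => GLF.pPure φ
  | .or φ ψ => GLF.pPure φ ∧ GLF.pPure ψ
  | _ => False

/-- Evaluation of propositional game logic formulas. -/
def GLF.pEval (v : V → Prop) : GLF L 𝒳 Act V → Prop
  | .var X => v X
  | .not φ => ¬ GLF.pEval v φ
  | .or φ ψ => GLF.pEval v φ ∨ GLF.pEval v ψ
  | _ => False

/-- Propositional tautologies of game logic: closure of the valid purely propositional
formulas under substitution of propositional variables. -/
inductive GLTaut : GLF L 𝒳 Act V → Prop
  | base {φ : GLF L 𝒳 Act V} : φ.pPure → (∀ v : V → Prop, φ.pEval v) → GLTaut φ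
  | subst {φ : GLF L 𝒳 Act V} (X : V) (ψ : GLF L 𝒳 Act V) : GLTaut φ → GLTaut (GLF.psub X ψ φ)

/-- Iterated implication in game logic. -/
def gimpChain : List (GLF L 𝒳 Act V) → GLF L 𝒳 Act V → GLF L 𝒳 Act V
  | [], χ => χ
  | φ :: t, χ => φ.gimp (gimpChain t χ)

/-- The first-order equality axioms for game logic. -/
inductive GLEqAx : GLF L 𝒳 Act V → Prop
  | refl (t : L.Term 𝒳) : GLEqAx (.lit (.eq t t))
  | symm (t₁ t₂ : L.Term 𝒳) : GLEqAx ((GLF.lit (.eq t₁ t₂)).gimp (.lit (.eq t₂ t₁)))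
  | trans (t₁ t₂ t₃ : L.Term 𝒳) :
      GLEqAx ((GLF.lit (.eq t₁ t₂)).gimp ((GLF.lit (.eq t₂ t₃)).gimp (.lit (.eq t₁ t₃))))
  | congFun {n : ℕ} (f : L.Functions n) (ts ts' : Fin n → L.Term 𝒳) :
      GLEqAx (gimpChain ((List.finRange n).map fun i => GLF.lit (.eq (ts i) (ts' i)))
        (.lit (.eq (Language.Term.func f ts) (Language.Term.func f ts'))))
  | congRel {n : ℕ} (R : L.Relations n) (ts ts' : Fin n → L.Term 𝒳) :
      GLEqAx (gimpChain ((List.finRange n).map fun i => GLF.lit (.eq (ts i) (ts' i)))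
        ((GLF.lit (.rel R ts)).gimp (.lit (.rel R ts'))))

end GLAx

/-! ## The Hilbert-style proof calculus for first-order game logic -/

section GLCalc

variable {L : Language} {𝒳 V A₀ : Type*} [DecidableEq 𝒳] [DecidableEq V]

/-- Provability `T ⊢_GL φ` in the `GL`-calculus (operating on `GL`-formulas, i.e.
formulas without propositional variables), with rules `MP`, `M`, `FP*`, the game
axioms `⟨?⟩`, `⟨∪⟩`, `⟨;⟩`, `⟨*⟩`, `⟨ᵈ⟩`, the axioms `∃I`, `V`, `⟨:=⟩`, and all
propositional tautologies and equality axioms. -/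
inductive GLPrv (sw : 𝒳 → 𝒳 → A₀ → A₀) (fvB : A₀ → Set 𝒳)
    (T : Set (GLF L 𝒳 (CAct L 𝒳 A₀) V)) : GLF L 𝒳 (CAct L 𝒳 A₀) V → Prop
  | hyp {φ} : φ ∈ T → GLPrv sw fvB T φ
  | taut {φ} : GLTaut φ → φ.pvars = ∅ → GLPrv sw fvB T φ
  | eqax {φ} : GLEqAx φ → GLPrv sw fvB T φ
  | existsI {x θ φ} : φ.pvars = ∅ → GOAdm fvB x θ φ →
      GLPrv sw fvB T ((φ.osub x θ).gimp (.dia (.act (.rand x)) φ))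
  | vac {x ψ} : ψ.pvars = ∅ → x ∉ ψ.ovarsF fvB →
      GLPrv sw fvB T ((GLF.dia (.act (.rand x)) ψ).gimp ψ)
  | asgn {x y : 𝒳} {θ : L.Term 𝒳} {φ} : φ.pvars = ∅ → y ≠ x → y ∉ tvars θ →
      y ∉ φ.ovarsF fvB →
      GLPrv sw fvB T ((GLF.dia (.act (.asn x θ)) φ).giff
        (.dia (.act (.rand y)) ((GLF.lit (.eq (.var y) θ)).gand (φ.oswap sw x y))))
  | testAx {ψ φ} : ψ.pvars = ∅ → φ.pvars = ∅ →
      GLPrv sw fvB T ((GLF.dia (.test ψ) φ).giff (ψ.gand φ))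
  | choiceAx {γ₁ γ₂ φ} : γ₁.pvars = ∅ → γ₂.pvars = ∅ → φ.pvars = ∅ →
      GLPrv sw fvB T ((GLF.dia (.choice γ₁ γ₂) φ).giff (.or (.dia γ₁ φ) (.dia γ₂ φ)))
  | seqAx {γ₁ γ₂ φ} : γ₁.pvars = ∅ → γ₂.pvars = ∅ → φ.pvars = ∅ →
      GLPrv sw fvB T ((GLF.dia (.seq γ₁ γ₂) φ).giff (.dia γ₁ (.dia γ₂ φ)))
  | starAx {γ φ} : γ.pvars = ∅ → φ.pvars = ∅ →
      GLPrv sw fvB T ((GLF.dia (.star γ) φ).giff (.or φ (.dia γ (.dia (.star γ) φ))))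
  | dualAx {γ φ} : γ.pvars = ∅ → φ.pvars = ∅ →
      GLPrv sw fvB T ((GLF.dia (.dual γ) φ).giff (.not (.dia γ (.not φ))))
  | mp {φ ψ} : GLPrv sw fvB T (ψ.gimp φ) → GLPrv sw fvB T ψ → GLPrv sw fvB T φ
  | mono (γ : GLG L 𝒳 (CAct L 𝒳 A₀) V) {ψ φ} : γ.pvars = ∅ →
      GLPrv sw fvB T (ψ.gimp φ) →
      GLPrv sw fvB T ((GLF.dia γ ψ).gimp (.dia γ φ))
  | fp {γ ψ φ} : γ.pvars = ∅ →
      GLPrv sw fvB T ((GLF.or ψ (.dia γ φ)).gimp φ) →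
      GLPrv sw fvB T ((GLF.dia (.star γ) ψ).gimp φ)

end GLCalc

/-! Induct on the derivation of `φ♯ = m`. Substitution commutes with complementation, which
settles `¬` and `ᵈ`. In the `*` case, freshness makes the `μ`-bound variable differ from `X` and
keeps it out of `ψ`, so the substitution passes under the binder and the side conditions of the
`*` clause still hold. -/

section SharpSubst

variable {L : Language} {𝒳 Act V : Type*}

lemma bar_involutive : Function.Involutive (bar : V ⊕ V → V ⊕ V) := by
  rintro (X | X) <;> rfl

lemma unbar_bar (X : V ⊕ V) : unbar (bar X) = unbar X := by cases X <;> rfl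

lemma bar_ne_self (X : V ⊕ V) : bar X ≠ X := by cases X <;> simp [bar]

lemma Lit.neg_neg (p : Lit L 𝒳) : p.neg.neg = p := by cases p <;> rfl

lemma MuF.compl_compl (m : MuF L 𝒳 Act V) : m.compl.compl = m := by
  induction m <;> simp [MuF.compl, Lit.neg_neg, bar_involutive _, *]

lemma MuF.boundVars_compl (m : MuF L 𝒳 Act V) : m.compl.boundVars = bar '' m.boundVars := by
  induction m <;> simp [MuF.compl, MuF.boundVars, image_union, image_insert_eq, *]

lemma MuF.forall_boundVars_of_compl {P : V → Prop} {m : MuF L 𝒳 Act V}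
    (h : ∀ B ∈ m.compl.boundVars, P (unbar B)) : ∀ B ∈ m.boundVars, P (unbar B) :=
  fun B hB => unbar_bar B ▸ h _ (MuF.boundVars_compl m ▸ mem_image_of_mem bar hB)

variable [DecidableEq V]

lemma MuF.subst_compl (X : V ⊕ V) (n m : MuF L 𝒳 Act V) :
    MuF.subst X n m.compl = (MuF.subst X n m).compl := by
  induction m with
  | var Y =>
    simp only [MuF.compl, MuF.subst, bar_involutive.eq_iff, bar_involutive X]
    split_ifs with hbar hX
    · exact absurd (hbar.symm.trans hX) (bar_ne_self X)
    · exact (MuF.compl_compl n).symm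
    all_goals rfl
  | mu Y φ ih | nu Y φ ih =>
    simp only [MuF.compl, MuF.subst, bar_involutive Y, or_comm, ih]
    split_ifs <;> rfl
  | _ => simp [MuF.compl, MuF.subst, *]

lemma MuF.subst_mu_of_ne {X Y : V ⊕ V} (hY : X ≠ Y) (hbarY : X ≠ bar Y)
    (n m : MuF L 𝒳 Act V) : MuF.subst X n (.mu Y m) = .mu Y (MuF.subst X n m) := by
  simp [MuF.subst, hY, hbarY]

mutual
theorem GLF.pvars_psub_subset (X : V) (χ : GLF L 𝒳 Act V) :
    ∀ φ : GLF L 𝒳 Act V, (GLF.psub X χ φ).pvars ⊆ φ.pvars ∪ χ.pvars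
  | .lit _ => by simp [GLF.psub, GLF.pvars]
  | .var Y => by
    unfold GLF.psub
    split_ifs <;> simp [GLF.pvars]
  | .not φ => GLF.pvars_psub_subset X χ φ
  | .or φ₁ φ₂ => union_union_distrib_right .. ▸ union_subset_union
      (GLF.pvars_psub_subset X χ φ₁) (GLF.pvars_psub_subset X χ φ₂)
  | .dia γ φ => union_union_distrib_right .. ▸ union_subset_union
      (GLG.pvars_psub_subset X χ γ) (GLF.pvars_psub_subset X χ φ)

theorem GLG.pvars_psub_subset (X : V) (χ : GLF L 𝒳 Act V) :
    ∀ γ : GLG L 𝒳 Act V, (GLG.psub X χ γ).pvars ⊆ γ.pvars ∪ χ.pvars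
  | .act _ => by simp [GLG.psub, GLG.pvars]
  | .test φ => GLF.pvars_psub_subset X χ φ
  | .choice γ₁ γ₂ | .seq γ₁ γ₂ => union_union_distrib_right .. ▸ union_subset_union
      (GLG.pvars_psub_subset X χ γ₁) (GLG.pvars_psub_subset X χ γ₂)
  | .star γ | .dual γ => GLG.pvars_psub_subset X χ γ
end

end SharpSubst

/-- the translation `♯` commutes with substitution of propositional
variables: `(φ[ψ/X])♯ = φ♯[ψ♯/X]`, provided the fresh bound propositional variables
introduced by `♯` are distinct from `X` and from the propositional variables of `ψ`. -/
theorem sharp_commutes_subst (L : Language) (𝒳 Act V : Type*) [DecidableEq V]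
    (X : V) (φ ψ : GLF L 𝒳 Act V) (m n : MuF L 𝒳 Act V)
    (hm : Sharp φ m) (hn : Sharp ψ n)
    (hfresh : ∀ B ∈ m.boundVars, unbar B ≠ X ∧ unbar B ∉ ψ.pvars) :
    Sharp (GLF.psub X ψ φ) (MuF.subst (Sum.inl X) n m) := by
  induction hm with
  | lit p => exact .lit p
  | var Y =>
    by_cases hY : Y = X
    · subst hY
      simpa [GLF.psub, MuF.subst] using hn
    · simpa [GLF.psub, MuF.subst, hY, bar] using Sharp.var Y
  | not _ ih =>
    rw [MuF.subst_compl]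
    exact .not <| ih <|
      MuF.forall_boundVars_of_compl (P := fun Y => Y ≠ X ∧ Y ∉ ψ.pvars) hfresh
  | dual _ ih =>
    rw [MuF.subst_compl]
    exact .dual <| ih <|
      MuF.forall_boundVars_of_compl (P := fun Y => Y ≠ X ∧ Y ∉ ψ.pvars) hfresh
  | or _ _ ih₁ ih₂ =>
    exact .or (ih₁ fun B hB => hfresh B (.inl hB)) (ih₂ fun B hB => hfresh B (.inr hB))
  | test _ _ ih₁ ih₂ =>
    exact .test (ih₁ fun B hB => hfresh B (.inl hB)) (ih₂ fun B hB => hfresh B (.inr hB))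
  | choice _ _ ih₁ ih₂ =>
    exact .choice (ih₁ fun B hB => hfresh B (.inl hB)) (ih₂ fun B hB => hfresh B (.inr hB))
  | act _ ih => exact .act (ih hfresh)
  | seq _ ih => exact .seq (ih hfresh)
  | @star γ χ Y _ hχY hγY _ ih =>
    have hYX : Y ≠ X := (hfresh _ (.inl rfl)).1
    have hYψ : Y ∉ ψ.pvars := (hfresh _ (.inl rfl)).2
    rw [MuF.subst_mu_of_ne (by simpa using hYX.symm) (by simp [bar])]
    refine .star (fun h => (GLF.pvars_psub_subset X ψ χ h).elim hχY hYψ)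
      (fun h => (GLG.pvars_psub_subset X ψ γ h).elim hγY hYψ) ?_
    simpa [GLF.psub, hYX] using ih fun B hB => hfresh B (.inr hB)

end GLMu
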